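/- Let k be an infinite field and A a k-k-biring that is finitely generated as a k-algebra. Then Spec A is geometrically connected: for every field extension K of k, the only idempotent elements of A ⊗[k] K are 0 and 1. (Lemma 4.3 of the paper: any k-algebra scheme of finite type over an infinite field is geometrically connected.) -/

import Mathlib

/-! The `R`-points of `Spec A` form a commutative ring, and evaluating a sum or product of two
points on `R ⊗[k] A` amounts to evaluating one of them after an algebra endomorphism of
`R ⊗[k] A`, which preserves idempotents. Hence "agreeing on every idempotent of `R ⊗[k] A`", i.e.
lying in the same connected component, is a ring congruence on the points. For `R = L` algebraically closed, `L ⊗[k] A` is Noetherian and has finitely many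
idempotents, so the quotient ring is finite; since it receives a ring map from the infinite field
`k` through `β`, it is zero. Thus an idempotent of `L ⊗[k] A` takes one and the same value, `0` or
`1`, at every `L`-point, and by the Nullstellensatz it is `0` or `1`. Finally `A ⊗[k] K` embeds
into `A ⊗[k] L` for `L` an algebraic closure of `K`. -/

/- A `k`-biring: a commutative `k`-algebra `A` with coaddition, additive counit, antipode,
comultiplication and multiplicative counit, such that for every commutative `k`-algebra `R`
the induced operations make `Hom_{k-alg}(A, R)` a commutative unital ring (equivalently, the
diagrammatic coring/codistributivity axioms hold). -/

open scoped TensorProduct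

/-- The binary operation on `k`-algebra homomorphisms `A →ₐ[k] R` induced by a
comultiplication-type map `Δ : A →ₐ[k] A ⊗[k] A`: `(f, g) ↦ mult ∘ (f ⊗ g) ∘ Δ`. -/
noncomputable def ptOp (k A : Type) [Field k] [CommRing A] [Algebra k A]
    (Δ : A →ₐ[k] A ⊗[k] A) {R : Type} [CommRing R] [Algebra k R]
    (f g : A →ₐ[k] R) : A →ₐ[k] R :=
  (Algebra.TensorProduct.lmul' k (S := R)).comp ((Algebra.TensorProduct.map f g).comp Δ)

/-- The constant point induced by a counit-type map `ε : A →ₐ[k] k`. -/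
noncomputable def ptConst (k A : Type) [Field k] [CommRing A] [Algebra k A]
    (ε : A →ₐ[k] k) {R : Type} [CommRing R] [Algebra k R] : A →ₐ[k] R :=
  (Algebra.ofId k R).comp ε

/-- A `k`-biring structure on the commutative `k`-algebra `A`; equivalently, the structure of
an affine ring scheme on `Spec A` over `k`. -/
structure Biring (k A : Type) [Field k] [CommRing A] [Algebra k A] where
  coadd : A →ₐ[k] A ⊗[k] A
  counitAdd : A →ₐ[k] k
  antipode : A →ₐ[k] A
  comul : A →ₐ[k] A ⊗[k] A
  counitMul : A →ₐ[k] k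
  pt_add_assoc : ∀ (R : Type) [CommRing R] [Algebra k R] (f g h : A →ₐ[k] R),
    ptOp k A coadd (ptOp k A coadd f g) h = ptOp k A coadd f (ptOp k A coadd g h)
  pt_add_comm : ∀ (R : Type) [CommRing R] [Algebra k R] (f g : A →ₐ[k] R),
    ptOp k A coadd f g = ptOp k A coadd g f
  pt_zero_add : ∀ (R : Type) [CommRing R] [Algebra k R] (f : A →ₐ[k] R),
    ptOp k A coadd (ptConst k A counitAdd) f = f
  pt_add_neg : ∀ (R : Type) [CommRing R] [Algebra k R] (f : A →ₐ[k] R),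
    ptOp k A coadd f (f.comp antipode) = ptConst k A counitAdd
  pt_mul_assoc : ∀ (R : Type) [CommRing R] [Algebra k R] (f g h : A →ₐ[k] R),
    ptOp k A comul (ptOp k A comul f g) h = ptOp k A comul f (ptOp k A comul g h)
  pt_mul_comm : ∀ (R : Type) [CommRing R] [Algebra k R] (f g : A →ₐ[k] R),
    ptOp k A comul f g = ptOp k A comul g f
  pt_one_mul : ∀ (R : Type) [CommRing R] [Algebra k R] (f : A →ₐ[k] R),
    ptOp k A comul (ptConst k A counitMul) f = f
  pt_mul_add : ∀ (R : Type) [CommRing R] [Algebra k R] (f g h : A →ₐ[k] R),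
    ptOp k A comul f (ptOp k A coadd g h)
      = ptOp k A coadd (ptOp k A comul f g) (ptOp k A comul f h)

/-- A `k`-`k`-biring: a `k`-biring `A` together with a map `β` from `k` to the set of
`k`-algebra homomorphisms `A → k` such that `β 0 = ε⁺`, `β 1 = ε×`,
`β (c + c') = (β c ⊗ β c') ∘ Δ⁺` and `β (c * c') = (β c ⊗ β c') ∘ Δ×`; equivalently, an
affine `k`-algebra scheme over `k`. -/
structure Bibiring (k A : Type) [Field k] [CommRing A] [Algebra k A]
    extends Biring k A where
  beta : k → (A →ₐ[k] k)
  beta_zero : beta 0 = counitAdd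
  beta_one : beta 1 = counitMul
  beta_add : ∀ c c' : k, beta (c + c') = ptOp k A coadd (beta c) (beta c')
  beta_mul : ∀ c c' : k, beta (c * c') = ptOp k A comul (beta c) (beta c')

section Idempotents

variable {S : Type*} [CommRing S]

theorem IsIdempotentElem.exists_isMaximal_notMem {e : S} (he : IsIdempotentElem e)
    (h0 : e ≠ 0) : ∃ m : Ideal S, m.IsMaximal ∧ e ∉ m := by
  have hunit : ¬IsUnit (1 - e) := fun hu => h0 (hu.mul_right_eq_zero.mp he.one_sub_mul_self)
  obtain ⟨m, hm, hmem⟩ := exists_max_ideal_of_mem_nonunits hunit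
  refine ⟨m, hm, fun he' => hm.ne_top ((m.eq_top_iff_one).mpr ?_)⟩
  simpa using m.add_mem he' hmem

theorem IsIdempotentElem.one_sub_mem_of_notMem {e : S} (he : IsIdempotentElem e) {p : Ideal S}
    [p.IsPrime] (hep : e ∉ p) : 1 - e ∈ p :=
  (Ideal.IsPrime.mem_or_mem ‹_› (he.one_sub_mul_self ▸ p.zero_mem)).resolve_right hep

theorem IsIdempotentElem.eq_of_forall_minimalPrimes_mem_iff {u v : S} (hu : IsIdempotentElem u)
    (hv : IsIdempotentElem v) (h : ∀ p ∈ minimalPrimes S, u ∈ p ↔ v ∈ p) : u = v := by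
  refine eq_of_isNilpotent_sub_of_isIdempotentElem hu hv (nilpotent_iff_mem_prime.mpr ?_)
  intro J _
  obtain ⟨p, hp, hpJ⟩ := Ideal.exists_minimalPrimes_le (bot_le : ⊥ ≤ J)
  have : p.IsPrime := hp.1.1
  refine hpJ ?_
  by_cases hup : u ∈ p
  · exact p.sub_mem hup ((h p hp).mp hup)
  · have hvp : v ∉ p := fun hvp => hup ((h p hp).mpr hvp)
    simpa using p.sub_mem (hv.one_sub_mem_of_notMem hvp) (hu.one_sub_mem_of_notMem hup)

theorem finite_isIdempotentElem_of_isNoetherianRing [IsNoetherianRing S] :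
    Finite {e : S // IsIdempotentElem e} := by
  have := (minimalPrimes.finite_of_isNoetherianRing S).to_subtype
  refine Finite.of_injective (fun e (p : minimalPrimes S) => e.1 ∈ p.1) fun u v huv => ?_
  exact Subtype.ext (u.2.eq_of_forall_minimalPrimes_mem_iff v.2
    fun p hp => iff_of_eq (congrFun huv ⟨p, hp⟩))

end Idempotents

section AlgClosed

variable {L S : Type*} [Field L] [IsAlgClosed L] [CommRing S] [Algebra L S]
  [Algebra.FiniteType L S]

theorem exists_algHom_ker_eq_of_isMaximal (m : Ideal S) [m.IsMaximal] :
    ∃ φ : S →ₐ[L] L, RingHom.ker φ = m := by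
  let := Ideal.Quotient.field m
  have : Algebra.FiniteType L (S ⧸ m) :=
    .of_surjective (Ideal.Quotient.mkₐ L m) (Ideal.Quotient.mkₐ_surjective L m)
  have : Module.Finite L (S ⧸ m) := finite_of_finite_type_of_isJacobsonRing L _
  refine ⟨(IsAlgClosed.lift : S ⧸ m →ₐ[L] L).comp (Ideal.Quotient.mkₐ L m), ?_⟩
  exact (RingHom.ker_comp_of_injective _ (RingHom.injective _)).trans (Ideal.mk_ker)

theorem IsIdempotentElem.eq_zero_of_forall_algHom_apply_eq_zero {e : S}
    (he : IsIdempotentElem e) (h : ∀ φ : S →ₐ[L] L, φ e = 0) : e = 0 := by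
  by_contra h0
  obtain ⟨m, hm, hem⟩ := he.exists_isMaximal_notMem h0
  obtain ⟨φ, hφ⟩ := exists_algHom_ker_eq_of_isMaximal (L := L) m
  exact hem (hφ ▸ h φ)

end AlgClosed

section ptOp

variable {k A R : Type} [Field k] [CommRing A] [Algebra k A] [CommRing R] [Algebra k R]

theorem AlgHom.comp_ptOp {T : Type} [CommRing T] [Algebra k T] (φ : R →ₐ[k] T)
    (Δ : A →ₐ[k] A ⊗[k] A) (f g : A →ₐ[k] R) :
    φ.comp (ptOp k A Δ f g) = ptOp k A Δ (φ.comp f) (φ.comp g) := by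
  have : φ.comp ((Algebra.TensorProduct.lmul' k).comp (Algebra.TensorProduct.map f g)) =
      (Algebra.TensorProduct.lmul' k).comp
        (Algebra.TensorProduct.map (φ.comp f) (φ.comp g)) := by
    ext <;> simp
  simp only [ptOp, ← AlgHom.comp_assoc, this]

/-- The `R`-algebra endomorphism `r ⊗ a ↦ r • ∑ g a₍₂₎ ⊗ a₍₁₎` of `R ⊗[k] A`, where
`Δ a = ∑ a₍₁₎ ⊗ a₍₂₎`. -/
noncomputable def ptOpRight (Δ : A →ₐ[k] A ⊗[k] A) (g : A →ₐ[k] R) :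
    R ⊗[k] A →ₐ[R] R ⊗[k] A :=
  AlgHom.liftEquiv k R A (R ⊗[k] A)
    ((Algebra.TensorProduct.productMap Algebra.TensorProduct.includeRight
      (Algebra.TensorProduct.includeLeft.comp g)).comp Δ)

theorem liftEquiv_ptOp (Δ : A →ₐ[k] A ⊗[k] A) (f g : A →ₐ[k] R) :
    AlgHom.liftEquiv k R A R (ptOp k A Δ f g) =
      (AlgHom.liftEquiv k R A R f).comp (ptOpRight Δ g) := by
  have : ((AlgHom.liftEquiv k R A R f).restrictScalars k).comp
      (Algebra.TensorProduct.productMap Algebra.TensorProduct.includeRight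
        (Algebra.TensorProduct.includeLeft.comp g)) =
      (Algebra.TensorProduct.lmul' k).comp (Algebra.TensorProduct.map f g) := by
    ext <;> simp [mul_comm]
  ext a
  simpa [ptOpRight, ptOp] using (DFunLike.congr_fun this (Δ a)).symm

/-- `f` and `g` lie in the same connected component of `Spec (R ⊗[k] A)`, tested on the
idempotents of `R ⊗[k] A`. -/
def AlgHom.SameComponent (f g : A →ₐ[k] R) : Prop :=
  ∀ e : R ⊗[k] A, IsIdempotentElem e →
    AlgHom.liftEquiv k R A R f e = AlgHom.liftEquiv k R A R g e

namespace AlgHom.SameComponent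

theorem ptOp_left (Δ : A →ₐ[k] A ⊗[k] A) {f f' : A →ₐ[k] R} (h : f.SameComponent f')
    (g : A →ₐ[k] R) : (ptOp k A Δ f g).SameComponent (ptOp k A Δ f' g) := fun e he => by
  simpa only [liftEquiv_ptOp, AlgHom.comp_apply] using h _ (he.map (ptOpRight Δ g))

theorem ptOp (Δ : A →ₐ[k] A ⊗[k] A)
    (hcomm : ∀ f g : A →ₐ[k] R, ptOp k A Δ f g = ptOp k A Δ g f) {f f' g g' : A →ₐ[k] R}
    (hf : f.SameComponent f') (hg : g.SameComponent g') :
    (ptOp k A Δ f g).SameComponent (ptOp k A Δ f' g') := fun e he =>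
  calc _ = _ := hf.ptOp_left Δ g e he
    _ = _ := by rw [hcomm]
    _ = _ := hg.ptOp_left Δ f' e he
    _ = _ := by rw [hcomm]

end AlgHom.SameComponent

end ptOp

namespace Biring

variable {k A : Type} [Field k] [CommRing A] [Algebra k A]

/-- Type synonym for `A →ₐ[k] R`, carrying the ring structure of the `R`-points of `Spec A`
induced by `B`. -/
def Point (_B : Biring k A) (R : Type) [CommRing R] [Algebra k R] : Type := A →ₐ[k] R

variable (B : Biring k A) (R : Type) [CommRing R] [Algebra k R]

namespace Point

noncomputable instance : Add (B.Point R) := ⟨ptOp k A B.coadd⟩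
noncomputable instance : Mul (B.Point R) := ⟨ptOp k A B.comul⟩
noncomputable instance : Zero (B.Point R) := ⟨ptConst k A B.counitAdd⟩
noncomputable instance : One (B.Point R) := ⟨ptConst k A B.counitMul⟩
instance : Neg (B.Point R) := ⟨fun f => AlgHom.comp f B.antipode⟩

noncomputable instance : CommRing (B.Point R) :=
  CommRing.ofMinimalAxioms (B.pt_add_assoc R) (B.pt_zero_add R)
    (fun f => (B.pt_add_comm R _ f).trans (B.pt_add_neg R f)) (B.pt_mul_assoc R)
    (B.pt_mul_comm R) (B.pt_one_mul R) (B.pt_mul_add R)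

end Point

def componentCon : RingCon (B.Point R) where
  r := AlgHom.SameComponent
  iseqv := ⟨fun _ _ _ => rfl, fun h e he => (h e he).symm,
    fun h h' e he => (h e he).trans (h' e he)⟩
  add' := AlgHom.SameComponent.ptOp B.coadd (B.pt_add_comm R)
  mul' := AlgHom.SameComponent.ptOp B.comul (B.pt_mul_comm R)

instance [IsDomain R] [IsNoetherianRing (R ⊗[k] A)] : Finite (B.componentCon R).Quotient := by
  have := finite_isIdempotentElem_of_isNoetherianRing (S := R ⊗[k] A)
  have : Finite {r : R // IsIdempotentElem r} :=
    ((Set.toFinite {0, 1}).subset fun _ hr => IsIdempotentElem.iff_eq_zero_or_one.mp hr).to_subtype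
  let values (f : B.Point R) (e : {e : R ⊗[k] A // IsIdempotentElem e}) :
      {r : R // IsIdempotentElem r} :=
    ⟨AlgHom.liftEquiv k R A R f e, e.2.map _⟩
  refine Finite.of_injective (Quotient.lift values fun f g h => ?_) fun p q hpq => ?_
  · exact funext fun e => Subtype.ext (h e e.2)
  · induction p, q using Quotient.ind₂ with
    | _ f g => exact Quotient.sound fun e he => congrArg Subtype.val (congrFun hpq ⟨e, he⟩)

end Biring

namespace Bibiring

variable {k A : Type} [Field k] [CommRing A] [Algebra k A]

section

variable (B : Bibiring k A) (R : Type) [CommRing R] [Algebra k R]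

noncomputable def scalarPoint : k →+* B.Point R where
  toFun c := (Algebra.ofId k R).comp (B.beta c)
  map_one' := by simp only [B.beta_one]; rfl
  map_zero' := by simp only [B.beta_zero]; rfl
  map_add' c c' := by simp only [B.beta_add]; exact AlgHom.comp_ptOp _ _ _ _
  map_mul' c c' := by simp only [B.beta_mul]; exact AlgHom.comp_ptOp _ _ _ _

theorem subsingleton_componentCon_quotient [Infinite k] [IsDomain R]
    [IsNoetherianRing (R ⊗[k] A)] : Subsingleton (B.componentCon R).Quotient := by
  by_contra h
  have : Nontrivial (B.componentCon R).Quotient := not_subsingleton_iff_nontrivial.mp h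
  exact not_injective_infinite_finite _ ((B.componentCon R).mk'.comp (B.scalarPoint R)).injective

end

theorem eq_zero_or_one_of_isIdempotentElem (B : Bibiring k A) [Infinite k]
    [Algebra.FiniteType k A] (L : Type) [Field L] [IsAlgClosed L] [Algebra k L] {e : L ⊗[k] A}
    (he : IsIdempotentElem e) : e = 0 ∨ e = 1 := by
  have := Algebra.FiniteType.isNoetherianRing L (L ⊗[k] A)
  have := B.subsingleton_componentCon_quotient L
  let ev₀ := AlgHom.liftEquiv k L A L (0 : B.Point L)
  have hconst (φ : L ⊗[k] A →ₐ[L] L) : φ e = ev₀ e := by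
    obtain ⟨x, rfl⟩ := (AlgHom.liftEquiv k L A L).surjective φ
    have hx : ((show B.Point L from x) : (B.componentCon L).Quotient) = ((0 : B.Point L) : _) :=
      Subsingleton.elim _ _
    exact (RingCon.eq _).mp hx e he
  rcases IsIdempotentElem.iff_eq_zero_or_one.mp (he.map ev₀) with h0 | h1
  · exact Or.inl <|
      he.eq_zero_of_forall_algHom_apply_eq_zero (L := L) fun φ => (hconst φ).trans h0
  · refine Or.inr (sub_eq_zero.mp ?_).symm
    refine he.one_sub.eq_zero_of_forall_algHom_apply_eq_zero (L := L) fun φ => ?_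
    rw [map_sub, map_one, hconst, h1, sub_self]

end Bibiring

/-- **Lemma 4.3**: any `k`-algebra scheme of finite type over an infinite field `k` is
geometrically connected: for every field extension `K` of `k`, the only idempotents of
`A ⊗[k] K` are `0` and `1`. -/
theorem algebra_scheme_geometrically_connected
    (k A : Type) [Field k] [Infinite k] [CommRing A] [Algebra k A]
    (B : Bibiring k A) (hft : Algebra.FiniteType k A) :
    ∀ (K : Type) [Field K] [Algebra k K],
      ∀ e : A ⊗[k] K, e * e = e → e = 0 ∨ e = 1 := by
  intro K _ _ e he
  let L := AlgebraicClosure K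
  let j : A ⊗[k] K →ₐ[k] L ⊗[k] A := (Algebra.TensorProduct.comm k A L).toAlgHom.comp
    (Algebra.TensorProduct.map (AlgHom.id k A) (IsScalarTower.toAlgHom k K L))
  have hj : Function.Injective j := (Algebra.TensorProduct.comm k A L).injective.comp
    (Module.Flat.lTensor_preserves_injective_linearMap _ (algebraMap K L).injective)
  rcases B.eq_zero_or_one_of_isIdempotentElem L (IsIdempotentElem.map he j) with h | h
  · exact Or.inl (hj (h.trans (map_zero j).symm))
  · exact Or.inr (hj (h.trans (map_one j).symm))
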